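/- The right boundary operator b_r satisfies the blob-algebra relations: b_r² = b_r; e_{N−1} b_r e_{N−1} = y_r · e_{N−1} with blob weight y_r = sinh(h(α_r+1))/sinh(hα_r); and b_r e_i = e_i b_r for all 1 ≤ i ≤ N−2. -/

import Mathlib

noncomputable section

/-- Basis labels of `(ℂ²)^{⊗N}`: a state (0 = ↑, 1 = ↓) for each of the `N` sites. -/
abbrev Conf (N : ℕ) := Fin N → Fin 2

def pauliX : Matrix (Fin 2) (Fin 2) ℂ := !![0, 1; 1, 0]
def pauliY : Matrix (Fin 2) (Fin 2) ℂ := !![0, -Complex.I; Complex.I, 0]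
def pauliZ : Matrix (Fin 2) (Fin 2) ℂ := !![1, 0; 0, -1]
/-- `σ⁺ = (σˣ + iσʸ)/2`. -/
def pauliP : Matrix (Fin 2) (Fin 2) ℂ := !![0, 1; 0, 0]
/-- `σ⁻ = (σˣ − iσʸ)/2`. -/
def pauliM : Matrix (Fin 2) (Fin 2) ℂ := !![0, 0; 1, 0]

open Fin.NatCast in
/-- `X_j`: the operator on `(ℂ²)^{⊗N}` acting as the 2×2 matrix `X` on the `j`-th tensor
factor (sites labelled `1,…,N`) and as the identity on the others. -/
def siteOp (N : ℕ) [NeZero N] (X : Matrix (Fin 2) (Fin 2) ℂ) (j : ℕ) :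
    Matrix (Conf N) (Conf N) ℂ :=
  Matrix.of fun f g =>
    X (f ((j - 1 : ℕ) : Fin N)) (g ((j - 1 : ℕ) : Fin N)) *
      ∏ k ∈ Finset.univ.erase ((j - 1 : ℕ) : Fin N), if f k = g k then (1 : ℂ) else 0

/-- The Temperley–Lieb generator
`e_i = −(1/2)(σˣᵢσˣᵢ₊₁ + σʸᵢσʸᵢ₊₁ + cosh(h)(σᶻᵢσᶻᵢ₊₁ − 1) + sinh(h)(σᶻᵢ₊₁ − σᶻᵢ))`. -/
def eOp (N : ℕ) [NeZero N] (h : ℂ) (i : ℕ) : Matrix (Conf N) (Conf N) ℂ :=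
  (-(1 / 2 : ℂ)) •
    (siteOp N pauliX i * siteOp N pauliX (i + 1)
      + siteOp N pauliY i * siteOp N pauliY (i + 1)
      + Complex.cosh h • (siteOp N pauliZ i * siteOp N pauliZ (i + 1) - 1)
      + Complex.sinh h • (siteOp N pauliZ (i + 1) - siteOp N pauliZ i))

/-- The left boundary operator
`b_l = (1/(2 sinh(hα_l)))(i e^{hθ_l} σ⁺₁ + i e^{−hθ_l} σ⁻₁ + cosh(hα_l) σᶻ₁) + (1/2)·Id`. -/
def blobL (N : ℕ) [NeZero N] (h αl θl : ℂ) : Matrix (Conf N) (Conf N) ℂ :=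
  (1 / (2 * Complex.sinh (h * αl))) •
    ((Complex.I * Complex.exp (h * θl)) • siteOp N pauliP 1
      + (Complex.I * Complex.exp (-(h * θl))) • siteOp N pauliM 1
      + Complex.cosh (h * αl) • siteOp N pauliZ 1)
  + (1 / 2 : ℂ) • 1

/-- The right boundary operator
`b_r = −(1/(2 sinh(hα_r)))(i e^{hθ_r} σ⁺_N + i e^{−hθ_r} σ⁻_N + cosh(hα_r) σᶻ_N) + (1/2)·Id`. -/
def blobR (N : ℕ) [NeZero N] (h αr θr : ℂ) : Matrix (Conf N) (Conf N) ℂ :=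
  (-(1 / (2 * Complex.sinh (h * αr)))) •
    ((Complex.I * Complex.exp (h * θr)) • siteOp N pauliP N
      + (Complex.I * Complex.exp (-(h * θr))) • siteOp N pauliM N
      + Complex.cosh (h * αr) • siteOp N pauliZ N)
  + (1 / 2 : ℂ) • 1

/-!
Both operators are local: `b_r` is a 2×2 matrix `B` placed on the last site and `e_i` a 4×4
matrix `E` placed on sites `i, i+1`, and these placements `M ↦ M ⊗ 1` (up to reordering the
tensor factors) are algebra homomorphisms. Hence `b_r² = b_r` reduces to `B² = B`, which holds
since the traceless part `K` of `B` squares to `sinh²(hα_r)`. The relation `e b e = y e` reduces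
to `E (1 ⊗ B) E = y E`, which holds because `E = u vᵀ` has rank one, so that
`E M E = (vᵀ M u) E`, and `vᵀ (1 ⊗ B) u = e^h B₁₁ + e^{-h} B₀₀ = sinh(h(α_r+1)) / sinh(hα_r)`.
Finally, operators on disjoint sites commute.
-/

open Matrix Kronecker Finset

section SiteOperators

variable {ι d R : Type*} [Fintype ι] [DecidableEq ι] [Fintype d] [DecidableEq d] [CommRing R]

def ampliation {n m k : Type*} [Fintype n] [DecidableEq n] [Fintype m] [DecidableEq m]
    [Fintype k] [DecidableEq k] (e : n ≃ m × k) : Matrix m m R →ₐ[R] Matrix n n R where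
  toFun M := (M ⊗ₖ (1 : Matrix k k R)).submatrix e e
  map_one' := by simp
  map_mul' M M' := by simp [submatrix_mul_equiv, ← mul_kronecker_mul]
  map_zero' := by simp
  map_add' M M' := by simp [add_kronecker, submatrix_add]
  commutes' r := by simp [Algebra.algebraMap_eq_smul_one, smul_kronecker, submatrix_smul]

def siteMatrix (a : ι) (X : Matrix d d R) : Matrix (ι → d) (ι → d) R :=
  of fun f g => X (f a) (g a) * ∏ k ∈ univ.erase a, if f k = g k then (1 : R) else 0

theorem siteMatrix_eq_ampliation (a : ι) (X : Matrix d d R) :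
    siteMatrix a X = ampliation (Equiv.funSplitAt a d) X := by
  ext f g
  simp only [siteMatrix, ampliation, AlgHom.coe_mk, RingHom.coe_mk, MonoidHom.coe_mk,
    OneHom.coe_mk, submatrix_apply, of_apply, kroneckerMap_apply, one_apply, prod_boole,
    funext_iff, Equiv.funSplitAt_apply]
  congr 2
  simp [Subtype.forall]

def pairSplit {a b : ι} (hab : a ≠ b) :
    (ι → d) ≃ (d × d) × ({k // k ≠ a ∧ k ≠ b} → d) where
  toFun f := ((f a, f b), fun k => f k)
  invFun p k := if h₁ : k = a then p.1.1 else if h₂ : k = b then p.1.2 else p.2 ⟨k, h₁, h₂⟩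
  left_inv f := by
    funext k
    by_cases h₁ : k = a
    · simp [h₁]
    · by_cases h₂ : k = b
      · simp [h₂, hab.symm]
      · simp [h₁, h₂]
  right_inv p := by
    ext k
    · simp
    · simp [hab.symm]
    · simp [k.2.1, k.2.2]

theorem siteMatrix_eq_ampliation_pairSplit_left {a b : ι} (hab : a ≠ b) (X : Matrix d d R) :
    siteMatrix a X = ampliation (pairSplit hab) (X ⊗ₖ 1) := by
  ext f g
  simp only [siteMatrix, ampliation, AlgHom.coe_mk, RingHom.coe_mk, MonoidHom.coe_mk,
    OneHom.coe_mk, submatrix_apply, of_apply, kroneckerMap_apply, one_apply, prod_boole,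
    funext_iff, pairSplit, Equiv.coe_fn_mk]
  rw [mul_assoc, ite_zero_mul_ite_zero, one_mul]
  congr 2
  simp only [mem_erase, mem_univ, and_true, Subtype.forall]
  grind

theorem siteMatrix_eq_ampliation_pairSplit_right {a b : ι} (hab : a ≠ b) (X : Matrix d d R) :
    siteMatrix b X = ampliation (pairSplit hab) (1 ⊗ₖ X) := by
  ext f g
  simp only [siteMatrix, ampliation, AlgHom.coe_mk, RingHom.coe_mk, MonoidHom.coe_mk,
    OneHom.coe_mk, submatrix_apply, of_apply, kroneckerMap_apply, one_apply, prod_boole,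
    funext_iff, pairSplit, Equiv.coe_fn_mk]
  rw [mul_comm (X _ _), mul_right_comm, ite_zero_mul_ite_zero, one_mul]
  congr 2
  simp only [mem_erase, mem_univ, and_true, Subtype.forall]
  grind

theorem siteMatrix_mul (a : ι) (X Y : Matrix d d R) :
    siteMatrix a X * siteMatrix a Y = siteMatrix a (X * Y) := by
  simp only [siteMatrix_eq_ampliation, map_mul]

theorem siteMatrix_mul_siteMatrix {a b : ι} (hab : a ≠ b) (X Y : Matrix d d R) :
    siteMatrix a X * siteMatrix b Y = ampliation (pairSplit hab) (X ⊗ₖ Y) := by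
  rw [siteMatrix_eq_ampliation_pairSplit_left hab, siteMatrix_eq_ampliation_pairSplit_right hab,
    ← map_mul, ← mul_kronecker_mul, mul_one, one_mul]

theorem siteMatrix_commute {a b : ι} (hab : a ≠ b) (X Y : Matrix d d R) :
    Commute (siteMatrix a X) (siteMatrix b Y) := by
  rw [Commute, SemiconjBy, siteMatrix_mul_siteMatrix hab,
    siteMatrix_eq_ampliation_pairSplit_left hab, siteMatrix_eq_ampliation_pairSplit_right hab, ← map_mul, ← mul_kronecker_mul, mul_one, one_mul]

theorem siteMatrix_commute_ampliation_pairSplit {a b c : ι} (hab : a ≠ b) (hca : c ≠ a)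
    (hcb : c ≠ b) (X : Matrix d d R) (M : Matrix (d × d) (d × d) R) :
    Commute (siteMatrix c X) (ampliation (pairSplit hab) M) := by
  induction M using Matrix.induction_on' with
  | h_zero => simp
  | h_add M M' hM hM' => simpa only [map_add] using hM.add_right hM'
  | h_std_basis p q r =>
    rw [← mul_one r, ← single_kronecker_single, ← siteMatrix_mul_siteMatrix hab]
    exact (siteMatrix_commute hca X _).mul_right (siteMatrix_commute hcb X _)

end SiteOperators

theorem isIdempotentElem_smul_add_half {𝕜 A : Type*} [Field 𝕜] [Ring A] [Algebra 𝕜 A] {K : A}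
    {s : 𝕜} (hs : s ≠ 0) (hK : K * K = s ^ 2 • 1) :
    IsIdempotentElem ((-(1 / (2 * s))) • K + (1 / 2 : 𝕜) • 1) := by
  simp only [IsIdempotentElem, add_mul, mul_add, smul_mul_smul, hK, mul_one, one_mul, smul_smul]
  -- In characteristic 2, `1 / 2 = 0` and both sides vanish.
  obtain h2 | h2 := eq_or_ne (2 : 𝕜) 0
  · simp [h2]
  · match_scalars <;> field_simp <;> ring

theorem vecMulVec_mul_mul_vecMulVec {n R : Type*} [Fintype n] [CommRing R] (u v : n → R)
    (M : Matrix n n R) : vecMulVec u v * M * vecMulVec u v = (v ⬝ᵥ M *ᵥ u) • vecMulVec u v := by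
  rw [vecMulVec_mul, vecMulVec_mul_vecMulVec, vecMulVec_smul, ← dotProduct_mulVec]

open Complex

def boundaryField (x φ : ℂ) : Matrix (Fin 2) (Fin 2) ℂ :=
  (I * exp φ) • pauliP + (I * exp (-φ)) • pauliM + cosh x • pauliZ

def blobMatrix (x φ : ℂ) : Matrix (Fin 2) (Fin 2) ℂ :=
  (-(1 / (2 * sinh x))) • boundaryField x φ + (1 / 2 : ℂ) • 1

theorem boundaryField_mul_self (x φ : ℂ) :
    boundaryField x φ * boundaryField x φ = sinh x ^ 2 • 1 := by
  have hsq : sinh x ^ 2 = cosh x ^ 2 - 1 := by rw [← cosh_sq_sub_sinh_sq x]; ring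
  ext i j
  fin_cases i <;> fin_cases j <;>
    simp [boundaryField, pauliP, pauliM, pauliZ, mul_apply, Fin.sum_univ_two, hsq, exp_neg] <;>
    field_simp <;> simp [I_sq] <;> ring

theorem isIdempotentElem_blobMatrix {x : ℂ} (hx : sinh x ≠ 0) (φ : ℂ) :
    IsIdempotentElem (blobMatrix x φ) :=
  isIdempotentElem_smul_add_half hx (boundaryField_mul_self x φ)

def tlMatrix (h : ℂ) : Matrix (Fin 2 × Fin 2) (Fin 2 × Fin 2) ℂ :=
  (-(1 / 2 : ℂ)) •
    (pauliX ⊗ₖ pauliX + pauliY ⊗ₖ pauliY + cosh h • (pauliZ ⊗ₖ pauliZ - 1)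
      + sinh h • (1 ⊗ₖ pauliZ - pauliZ ⊗ₖ 1))

def tlKet (h : ℂ) : Fin 2 × Fin 2 → ℂ := exp h • Pi.single (0, 1) 1 - Pi.single (1, 0) 1

def tlBra (h : ℂ) : Fin 2 × Fin 2 → ℂ := Pi.single (0, 1) 1 - exp (-h) • Pi.single (1, 0) 1

theorem tlMatrix_eq_vecMulVec (h : ℂ) : tlMatrix h = vecMulVec (tlKet h) (tlBra h) := by
  ext ⟨i, j⟩ ⟨k, l⟩
  fin_cases i <;> fin_cases j <;> fin_cases k <;> fin_cases l <;>
    simp [tlMatrix, tlKet, tlBra, pauliX, pauliY, pauliZ, vecMulVec_apply, one_apply,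
      Complex.cosh, Complex.sinh, exp_neg] <;> field_simp <;> ring

theorem tlBra_dotProduct_kronecker_mulVec_tlKet (h : ℂ) (B : Matrix (Fin 2) (Fin 2) ℂ) :
    tlBra h ⬝ᵥ (1 ⊗ₖ B) *ᵥ tlKet h = exp h * B 1 1 + exp (-h) * B 0 0 := by
  simp [tlKet, tlBra, dotProduct, mulVec, Fintype.sum_prod_type, Fin.sum_univ_two, one_apply,
    Pi.single_apply]
  ring

theorem tlMatrix_mul_kronecker_blobMatrix_mul_tlMatrix {x : ℂ} (hx : sinh x ≠ 0) (h φ : ℂ) :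
    tlMatrix h * (1 ⊗ₖ blobMatrix x φ) * tlMatrix h = (sinh (x + h) / sinh x) • tlMatrix h := by
  rw [tlMatrix_eq_vecMulVec, vecMulVec_mul_mul_vecMulVec, tlBra_dotProduct_kronecker_mulVec_tlKet]
  congr 1
  simp [blobMatrix, boundaryField, pauliP, pauliM, pauliZ, sinh_add, ← cosh_add_sinh]
  field_simp
  ring

open Fin.NatCast

theorem Fin.natCast_ne_natCast {N m n : ℕ} [NeZero N] (hm : m < N) (hn : n < N) (hmn : m ≠ n) :
    (m : Fin N) ≠ n := fun h =>
  hmn (by simpa [Fin.val_cast_of_lt hm, Fin.val_cast_of_lt hn] using congrArg Fin.val h)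

theorem siteOp_eq_siteMatrix (N : ℕ) [NeZero N] (X : Matrix (Fin 2) (Fin 2) ℂ) (j : ℕ) :
    siteOp N X j = siteMatrix ((j - 1 : ℕ) : Fin N) X :=
  rfl

theorem blobR_eq_siteMatrix (N : ℕ) [NeZero N] (h α θ : ℂ) :
    blobR N h α θ = siteMatrix ((N - 1 : ℕ) : Fin N) (blobMatrix (h * α) (h * θ)) := by
  simp only [blobR, blobMatrix, boundaryField, siteOp_eq_siteMatrix, siteMatrix_eq_ampliation,
    map_add, map_smul, map_one]

theorem eOp_eq_ampliation (N : ℕ) [NeZero N] (h : ℂ) {i : ℕ}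
    (hi : ((i - 1 : ℕ) : Fin N) ≠ ((i : ℕ) : Fin N)) :
    eOp N h i = ampliation (pairSplit hi) (tlMatrix h) := by
  rw [eOp, siteOp_eq_siteMatrix, siteOp_eq_siteMatrix, siteOp_eq_siteMatrix, siteOp_eq_siteMatrix,
    siteOp_eq_siteMatrix, siteOp_eq_siteMatrix, Nat.add_sub_cancel, siteMatrix_mul_siteMatrix hi,
    siteMatrix_mul_siteMatrix hi, siteMatrix_mul_siteMatrix hi]
  simp only [tlMatrix, siteMatrix_eq_ampliation_pairSplit_left hi,
    siteMatrix_eq_ampliation_pairSplit_right hi, map_add, map_sub, map_smul, map_one]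

/-- The right boundary operator `b_r` satisfies the blob-algebra relations with
blob weight `y_r = sinh(h(α_r+1))/sinh(hα_r)`. -/
theorem right_blob_relations (N : ℕ) [NeZero N] (hN : 2 ≤ N) (h αr θr : ℂ)
    (hαr : Complex.sinh (h * αr) ≠ 0) :
    blobR N h αr θr * blobR N h αr θr = blobR N h αr θr ∧
    eOp N h (N - 1) * blobR N h αr θr * eOp N h (N - 1)
      = (Complex.sinh (h * (αr + 1)) / Complex.sinh (h * αr)) • eOp N h (N - 1) ∧
    (∀ i : ℕ, 1 ≤ i → i ≤ N - 2 →
      blobR N h αr θr * eOp N h i = eOp N h i * blobR N h αr θr) := by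
  rw [blobR_eq_siteMatrix]
  refine ⟨by rw [siteMatrix_mul, isIdempotentElem_blobMatrix hαr], ?_, ?_⟩
  · have hi : ((N - 1 - 1 : ℕ) : Fin N) ≠ ((N - 1 : ℕ) : Fin N) :=
      Fin.natCast_ne_natCast (by omega) (by omega) (by omega)
    rw [eOp_eq_ampliation N h hi, siteMatrix_eq_ampliation_pairSplit_right hi, ← map_mul,
      ← map_mul, tlMatrix_mul_kronecker_blobMatrix_mul_tlMatrix hαr, map_smul, mul_add_one]
  · intro i hi₁ hi₂
    have hi : ((i - 1 : ℕ) : Fin N) ≠ ((i : ℕ) : Fin N) :=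
      Fin.natCast_ne_natCast (by omega) (by omega) (by omega)
    rw [eOp_eq_ampliation N h hi]
    exact siteMatrix_commute_ampliation_pairSplit hi
      (Fin.natCast_ne_natCast (by omega) (by omega) (by omega))
      (Fin.natCast_ne_natCast (by omega) (by omega) (by omega)) _ _
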